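/- arXiv:2401.01725 — 2 statements merged into one kernel-verified Lean document; each statement's English description precedes it below -/
import Mathlib

section
/- Let m ≥ 2 and let A = (a_{ij}) be a nonzero m×m complex matrix. Let p = Σ_{i,j=1}^m a_{ij} e_i ⊗ e_j ∈ ℂ^m ⊗ ℂ^m, where (e_i) is the standard orthonormal basis of ℂ^m, and let e : ℂ^m ⊗ ℂ^m → ℂ^m ⊗ ℂ^m be the orthogonal projection onto the line ℂp. Then there exists λ > 0 such that (e⊗1)(1⊗e)(e⊗1) = λ^{-1}(e⊗1) as operators on (ℂ^m)^{⊗3} if and only if there exists c > 0 such that c·(A·Ā) is a unitary matrix, where Ā denotes the entrywise complex conjugate of A. -/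
noncomputable section

open scoped InnerProductSpace Matrix ComplexOrder

/-- The `n`-fold tensor power `(ℂ^m)^{⊗n}`, realized as the space of
complex-valued functions on strings in `{1,…,m}^n`. -/
abbrev TP (m n : ℕ) : Type := EuclideanSpace ℂ (Fin n → Fin m)

/-- The set of vectors `x ⊗ p ⊗ y` spanning `J^{(n)}`, where
`p = Σ_{i,j} a_{ij} e_i ⊗ e_j` is the Temperley–Lieb vector of `A`. -/
def TLset (m : ℕ) (A : Matrix (Fin m) (Fin m) ℂ) (n : ℕ) : Set (TP m n) :=
  { v | ∃ (i : ℕ) (hi : i + 2 ≤ n) (x : TP m i) (y : TP m (n - (i + 2))),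
      v = WithLp.toLp 2 fun s => x (fun j => s ⟨j.1, by have := j.isLt; omega⟩) *
        A (s ⟨i, by omega⟩) (s ⟨i + 1, by omega⟩) *
        y (fun j => s ⟨i + 2 + j.1, by have := j.isLt; omega⟩) }

/-- `J^{(n)}`, the degree-`n` component of the ideal generated by `p`. -/
def Jsp (m : ℕ) (A : Matrix (Fin m) (Fin m) ℂ) (n : ℕ) : Submodule ℂ (TP m n) :=
  Submodule.span ℂ (TLset m A n)

/-- `H_n`, the orthogonal complement of `J^{(n)}`. -/
def Hsp (m : ℕ) (A : Matrix (Fin m) (Fin m) ℂ) (n : ℕ) : Submodule ℂ (TP m n) :=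
  (Jsp m A n)ᗮ

/-- `f_n`, the orthogonal projection of `(ℂ^m)^{⊗n}` onto `H_n`. -/
def fProj (m : ℕ) (A : Matrix (Fin m) (Fin m) ℂ) (n : ℕ) : TP m n →L[ℂ] TP m n :=
  (Hsp m A n).subtypeL ∘L Submodule.orthogonalProjectionOnto (Hsp m A n)

/-- The matrix of an operator on `(ℂ^m)^{⊗k}` in the standard basis. -/
def matOf {m k : ℕ} (B : TP m k →L[ℂ] TP m k) :
    Matrix (Fin k → Fin m) (Fin k → Fin m) ℂ :=
  fun s t => B (EuclideanSpace.single t 1) s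

/-- The ampliation `B ⊗ 1^{⊗(b-a)}` of an operator `B` on `(ℂ^m)^{⊗a}`, acting on the
first `a` tensor factors of `(ℂ^m)^{⊗b}`. -/
def ampFirst (m a b : ℕ) (h : a ≤ b) (B : TP m a →L[ℂ] TP m a) : TP m b →L[ℂ] TP m b :=
  Matrix.toEuclideanCLM (𝕜 := ℂ)
    (Matrix.of fun s t : Fin b → Fin m =>
      if (fun j : Fin (b - a) => s ⟨a + j.1, by have := j.isLt; omega⟩)
          = (fun j : Fin (b - a) => t ⟨a + j.1, by have := j.isLt; omega⟩)
        then matOf B (fun j : Fin a => s ⟨j.1, by have := j.isLt; omega⟩)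
               (fun j : Fin a => t ⟨j.1, by have := j.isLt; omega⟩)
        else 0)

/-- The ampliation `1^{⊗(b-a)} ⊗ C` of an operator `C` on `(ℂ^m)^{⊗a}`, acting on the
last `a` tensor factors of `(ℂ^m)^{⊗b}`. -/
def ampLast (m a b : ℕ) (h : a ≤ b) (C : TP m a →L[ℂ] TP m a) : TP m b →L[ℂ] TP m b :=
  Matrix.toEuclideanCLM (𝕜 := ℂ)
    (Matrix.of fun s t : Fin b → Fin m =>
      if (fun j : Fin (b - a) => s ⟨j.1, by have := j.isLt; omega⟩)
          = (fun j : Fin (b - a) => t ⟨j.1, by have := j.isLt; omega⟩)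
        then matOf C (fun j : Fin a => s ⟨(b - a) + j.1, by have := j.isLt; omega⟩)
               (fun j : Fin a => t ⟨(b - a) + j.1, by have := j.isLt; omega⟩)
        else 0)

/-- Tensoring on the left with the basis vector `e_i` : the isometry
`ξ ↦ e_i ⊗ ξ` from `(ℂ^m)^{⊗n}` to `(ℂ^m)^{⊗(n+1)}`. -/
def consCLM (m n : ℕ) (i : Fin m) : TP m n →L[ℂ] TP m (n + 1) :=
  LinearMap.toContinuousLinearMap <| Matrix.toEuclideanLin <|
    Matrix.of fun (s : Fin (n + 1) → Fin m) (t : Fin n → Fin m) =>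
      if s 0 = i ∧ (fun j : Fin n => s j.succ) = t then 1 else 0

/-- Tensoring on the right with the basis vector `e_j` : the isometry
`ξ ↦ ξ ⊗ e_j` from `(ℂ^m)^{⊗n}` to `(ℂ^m)^{⊗(n+1)}`. -/
def snocCLM (m n : ℕ) (j : Fin m) : TP m n →L[ℂ] TP m (n + 1) :=
  LinearMap.toContinuousLinearMap <| Matrix.toEuclideanLin <|
    Matrix.of fun (s : Fin (n + 1) → Fin m) (t : Fin n → Fin m) =>
      if s (Fin.last n) = j ∧ (fun k : Fin n => s k.castSucc) = t then 1 else 0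

/-- The left creation operator `L_i = f_{n+1}(e_i ⊗ ·) : (ℂ^m)^{⊗n} → (ℂ^m)^{⊗(n+1)}`. -/
def Lop (m : ℕ) (A : Matrix (Fin m) (Fin m) ℂ) (n : ℕ) (i : Fin m) :
    TP m n →L[ℂ] TP m (n + 1) :=
  fProj m A (n + 1) ∘L consCLM m n i

/-- The right creation operator `R_j = f_{n+1}(· ⊗ e_j) : (ℂ^m)^{⊗n} → (ℂ^m)^{⊗(n+1)}`. -/
def Rop (m : ℕ) (A : Matrix (Fin m) (Fin m) ℂ) (n : ℕ) (j : Fin m) :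
    TP m n →L[ℂ] TP m (n + 1) :=
  fProj m A (n + 1) ∘L snocCLM m n j

/-- The left creation operator `L_i : H_n → H_{n+1}`, viewed as a map between
the fibers of the subproduct system. -/
def LopH (m : ℕ) (A : Matrix (Fin m) (Fin m) ℂ) (n : ℕ) (i : Fin m) :
    Hsp m A n →L[ℂ] Hsp m A (n + 1) :=
  Submodule.orthogonalProjectionOnto (Hsp m A (n + 1)) ∘L consCLM m n i ∘L (Hsp m A n).subtypeL

/-- The right creation operator `R_j : H_n → H_{n+1}`, viewed as a map between
the fibers of the subproduct system. -/
def RopH (m : ℕ) (A : Matrix (Fin m) (Fin m) ℂ) (n : ℕ) (j : Fin m) :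
    Hsp m A n →L[ℂ] Hsp m A (n + 1) :=
  Submodule.orthogonalProjectionOnto (Hsp m A (n + 1)) ∘L snocCLM m n j ∘L (Hsp m A n).subtypeL

/-- The vector `p = Σ_{i,j} a_{ij} e_i ⊗ e_j ∈ ℂ^m ⊗ ℂ^m`. -/
def pVec (m : ℕ) (A : Matrix (Fin m) (Fin m) ℂ) : TP m 2 :=
  WithLp.toLp 2 fun s => A (s 0) (s 1)

/-- `e`, the orthogonal projection of `ℂ^m ⊗ ℂ^m` onto the line `ℂ·p`. -/
def eProj (m : ℕ) (A : Matrix (Fin m) (Fin m) ℂ) : TP m 2 →L[ℂ] TP m 2 :=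
  (ℂ ∙ pVec m A).subtypeL ∘L Submodule.orthogonalProjectionOnto (ℂ ∙ pVec m A)

/-!
Write `N = ‖p‖²` and `M = A Ā`. In the standard basis `e ⊗ 1 = N⁻¹ (|p⟩⟨p| ⊗ 1)` and
`1 ⊗ e = N⁻¹ (1 ⊗ |p⟩⟨p|)`, and a direct computation gives
`(|p⟩⟨p| ⊗ 1)(1 ⊗ |p⟩⟨p|)(|p⟩⟨p| ⊗ 1) = |p⟩⟨p| ⊗ MᴴM`. As `B ↦ |p⟩⟨p| ⊗ B` is injective for
`p ≠ 0`, the relation `(e⊗1)(1⊗e)(e⊗1) = λ⁻¹(e⊗1)` holds exactly when `MᴴM = λ⁻¹N² · 1`,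
that is, when `M` is a positive multiple of a unitary matrix.
-/

namespace Matrix

variable {n : Type*} [Fintype n] [DecidableEq n]

theorem smul_mem_unitaryGroup_iff (M : Matrix n n ℂ) {c : ℝ} (hc : c ≠ 0) :
    (c : ℂ) • M ∈ unitaryGroup n ℂ ↔ Mᴴ * M = (((c ^ 2)⁻¹ : ℝ) : ℂ) • 1 := by
  rw [mem_unitaryGroup_iff', star_smul, star_eq_conjTranspose, smul_mul_smul_comm,
    Complex.star_def, Complex.conj_ofReal, ← eq_inv_smul_iff₀ (by simpa using hc)]
  push_cast
  ring_nf

theorem exists_smul_mem_unitaryGroup_iff (M : Matrix n n ℂ) :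
    (∃ c : ℝ, 0 < c ∧ (c : ℂ) • M ∈ unitaryGroup n ℂ) ↔
      ∃ μ : ℝ, 0 < μ ∧ Mᴴ * M = (μ : ℂ) • 1 := by
  constructor
  · rintro ⟨c, hc, hM⟩
    exact ⟨(c ^ 2)⁻¹, by positivity, (smul_mem_unitaryGroup_iff M hc.ne').1 hM⟩
  · rintro ⟨μ, hμ, hM⟩
    refine ⟨(√μ)⁻¹, by positivity, (smul_mem_unitaryGroup_iff M (by positivity)).2 ?_⟩
    rwa [inv_pow, inv_inv, Real.sq_sqrt hμ.le]

end Matrix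

section FinPiSums

variable {α M : Type*} [Fintype α] [AddCommMonoid M]

theorem sum_fin_succ_pi {n : ℕ} (f : (Fin (n + 1) → α) → M) :
    ∑ u, f u = ∑ a, ∑ v : Fin n → α, f (Fin.cons a v) := by
  rw [← (Fin.consEquiv fun _ => α).sum_comp f, Fintype.sum_prod_type]
  rfl

theorem sum_fin_three_pi (f : (Fin 3 → α) → M) :
    ∑ u, f u = ∑ a, ∑ b, ∑ c, f ![a, b, c] := by
  simp only [sum_fin_succ_pi, Fintype.sum_unique]
  rfl

end FinPiSums

section TemperleyLieb

open Finset

variable {m : ℕ}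

/-- The matrix of `|p⟩⟨p| ⊗ B` on `(ℂ^m)^{⊗3}`, where `p = pVec m A`. -/
def projTensor (A B : Matrix (Fin m) (Fin m) ℂ) : Matrix (Fin 3 → Fin m) (Fin 3 → Fin m) ℂ :=
  Matrix.of fun s t => A (s 0) (s 1) * star (A (t 0) (t 1)) * B (s 2) (t 2)

/-- The matrix of `1 ⊗ |p⟩⟨p|` on `(ℂ^m)^{⊗3}`, where `p = pVec m A`. -/
def tensorProj (A : Matrix (Fin m) (Fin m) ℂ) : Matrix (Fin 3 → Fin m) (Fin 3 → Fin m) ℂ :=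
  Matrix.of fun s t => if s 0 = t 0 then A (s 1) (s 2) * star (A (t 1) (t 2)) else 0

theorem projTensor_smul (A B : Matrix (Fin m) (Fin m) ℂ) (z : ℂ) :
    projTensor A (z • B) = z • projTensor A B := by
  ext s t
  simp only [projTensor, Matrix.of_apply, Matrix.smul_apply, smul_eq_mul]
  ring

theorem projTensor_injective {A : Matrix (Fin m) (Fin m) ℂ} (hA : A ≠ 0) :
    Function.Injective (projTensor A) := by
  intro B C h
  obtain ⟨i, j, hij⟩ : ∃ i j, A i j ≠ 0 := by simpa [← Matrix.ext_iff] using hA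
  ext k l
  simpa [projTensor, hij] using congrFun₂ h ![i, j, k] ![i, j, l]

theorem projTensor_one_mul_tensorProj_mul (A : Matrix (Fin m) (Fin m) ℂ) :
    projTensor A 1 * (tensorProj A * projTensor A 1) =
      projTensor A ((A * A.map (starRingEnd ℂ))ᴴ * (A * A.map (starRingEnd ℂ))) := by
  ext s t
  simp only [Matrix.mul_apply, projTensor, tensorProj, Matrix.of_apply, sum_fin_three_pi,
    Matrix.one_apply, Matrix.cons_val_zero, Matrix.cons_val_one, Matrix.cons_val_two,
    Matrix.tail_cons, Matrix.head_cons]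
  simp only [mul_ite, ite_mul, mul_zero, zero_mul, mul_one, sum_ite_eq, sum_ite_eq', mem_univ,
    if_true, sum_ite_irrel, sum_const_zero, Matrix.conjTranspose_apply, Matrix.mul_apply,
    Matrix.map_apply, starRingEnd_apply, star_sum, star_mul', star_star, mul_sum, sum_mul]
  refine sum_congr rfl fun x _ => ?_
  rw [sum_comm]
  refine sum_congr rfl fun y _ => sum_congr rfl fun z _ => ?_
  ring

theorem pVec_ne_zero {A : Matrix (Fin m) (Fin m) ℂ} (hA : A ≠ 0) : pVec m A ≠ 0 := by
  refine fun h => hA (Matrix.ext fun i j => ?_)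
  simpa [pVec] using congr($h ![i, j])

theorem matOf_eProj (A : Matrix (Fin m) (Fin m) ℂ) (s t : Fin 2 → Fin m) :
    matOf (eProj m A) s t =
      ((‖pVec m A‖ ^ 2 : ℝ) : ℂ)⁻¹ * (A (s 0) (s 1) * star (A (t 0) (t 1))) := by
  have h : eProj m A (EuclideanSpace.single t 1) =
      (⟪pVec m A, EuclideanSpace.single t 1⟫_ℂ / ((‖pVec m A‖ ^ 2 : ℝ) : ℂ)) • pVec m A :=
    Submodule.starProjection_singleton ℂ _
  simp only [matOf, h, EuclideanSpace.inner_single_right, pVec, one_mul, Complex.ofReal_pow,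
    PiLp.smul_apply, smul_eq_mul, RCLike.star_def]
  ring

theorem ampFirst_eProj (A : Matrix (Fin m) (Fin m) ℂ) :
    ampFirst m 2 3 (Nat.le_succ 2) (eProj m A) =
      ((‖pVec m A‖ ^ 2 : ℝ) : ℂ)⁻¹ • Matrix.toEuclideanCLM (𝕜 := ℂ) (projTensor A 1) := by
  rw [ampFirst, ← map_smul]
  congr 1
  ext s t
  simp [matOf_eProj, projTensor, Matrix.one_apply, funext_iff]

theorem ampLast_eProj (A : Matrix (Fin m) (Fin m) ℂ) :
    ampLast m 2 3 (Nat.le_succ 2) (eProj m A) =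
      ((‖pVec m A‖ ^ 2 : ℝ) : ℂ)⁻¹ • Matrix.toEuclideanCLM (𝕜 := ℂ) (tensorProj A) := by
  rw [ampLast, ← map_smul]
  congr 1
  ext s t
  simp [matOf_eProj, tensorProj, funext_iff]

theorem ampFirst_comp_ampLast_comp_ampFirst_eProj_iff {A : Matrix (Fin m) (Fin m) ℂ}
    (hA : A ≠ 0) (lam : ℝ) :
    ampFirst m 2 3 (Nat.le_succ 2) (eProj m A) ∘L
          (ampLast m 2 3 (Nat.le_succ 2) (eProj m A) ∘L
            ampFirst m 2 3 (Nat.le_succ 2) (eProj m A)) =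
        (lam : ℂ)⁻¹ • ampFirst m 2 3 (Nat.le_succ 2) (eProj m A) ↔
      (A * A.map (starRingEnd ℂ))ᴴ * (A * A.map (starRingEnd ℂ)) =
        ((lam⁻¹ * ‖pVec m A‖ ^ 4 : ℝ) : ℂ) • 1 := by
  have hN : ((‖pVec m A‖ ^ 2 : ℝ) : ℂ) ≠ 0 := by simpa using pVec_ne_zero hA
  rw [ampFirst_eProj, ampLast_eProj, ← ContinuousLinearMap.mul_def, ← ContinuousLinearMap.mul_def,
    ← map_smul, ← map_smul, ← map_smul, ← map_mul, ← map_mul, EmbeddingLike.apply_eq_iff_eq,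
    smul_mul_smul_comm, smul_mul_smul_comm, projTensor_one_mul_tensorProj_mul, smul_smul,
    ← projTensor_smul, ← projTensor_smul, (projTensor_injective hA).eq_iff,
    ← eq_inv_smul_iff₀ (by simpa using hN), smul_smul]
  congr! 3
  push_cast
  field_simp

end TemperleyLieb

/-- `p` is a Temperley–Lieb vector, i.e.
`(e⊗1)(1⊗e)(e⊗1) = λ⁻¹ (e⊗1)` on `(ℂ^m)^{⊗3}` for some `λ > 0`, if and only if
`c·(A·Ā)` is unitary for some `c > 0`. -/
theorem statement0 (m : ℕ) (A : Matrix (Fin m) (Fin m) ℂ)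
    (hA : A ≠ 0) :
    (∃ lam : ℝ, 0 < lam ∧
        ampFirst m 2 3 (by omega) (eProj m A) ∘L
            (ampLast m 2 3 (by omega) (eProj m A) ∘L
              ampFirst m 2 3 (by omega) (eProj m A))
          = ((lam : ℂ))⁻¹ • ampFirst m 2 3 (by omega) (eProj m A)) ↔
    (∃ c : ℝ, 0 < c ∧
        (c : ℂ) • (A * A.map (starRingEnd ℂ)) ∈ Matrix.unitaryGroup (Fin m) ℂ) := by
  have hp : 0 < ‖pVec m A‖ := norm_pos_iff.2 (pVec_ne_zero hA)
  simp_rw [ampFirst_comp_ampLast_comp_ampFirst_eProj_iff hA,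
    Matrix.exists_smul_mem_unitaryGroup_iff]
  constructor
  · rintro ⟨lam, hlam, h⟩
    exact ⟨_, by positivity, h⟩
  · rintro ⟨μ, hμ, h⟩
    refine ⟨‖pVec m A‖ ^ 4 / μ, by positivity, ?_⟩
    rw [h]
    field_simp
end
end

section
/- For every n ≥ 1 one has Σ_{i=1}^m L_i L_i* = id_{H_n}, where each L_i is viewed as a map H_{n−1} → H_n. (Equivalently, on the Fock space ⊕_{n≥0} H_n the operator 1 − Σ_{i=1}^m L_i L_i* is the rank-one projection onto H_0.) -/
noncomputable section

open scoped InnerProductSpace Matrix ComplexOrder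

/-- The Hilbert-space adjoint `L_i* : H_{n+1} → H_n` of the left creation operator. -/
noncomputable def LopHadj (m : ℕ) (A : Matrix (Fin m) (Fin m) ℂ) (n : ℕ) (i : Fin m) :
    Hsp m A (n + 1) →L[ℂ] Hsp m A n :=
  ContinuousLinearMap.adjoint (𝕜 := ℂ) (E := ↥(Hsp m A n)) (F := ↥(Hsp m A (n + 1)))
    (LopH m A n i)

/-!
The contraction `η ↦ η(i, ·)` is the adjoint of `ξ ↦ e_i ⊗ ξ`, and it maps `H_{n+1}` into `H_n`
because `e_i ⊗ J^{(n)} ⊆ J^{(n+1)}`. Hence `L_i*` is this contraction, and for `ξ ∈ H_{n+1}`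
we get `Σ_i L_i L_i* ξ = f_{n+1} (Σ_i e_i ⊗ ξ(i, ·)) = f_{n+1} ξ = ξ`.
-/

section

variable (m : ℕ) (A : Matrix (Fin m) (Fin m) ℂ) (n : ℕ) (i : Fin m)

def dropCLM : TP m (n + 1) →L[ℂ] TP m n :=
  LinearMap.toContinuousLinearMap
    { toFun := fun η => WithLp.toLp 2 fun t => η (Fin.cons i t)
      map_add' := fun _ _ => rfl
      map_smul' := fun _ _ => rfl }

lemma dropCLM_apply (η : TP m (n + 1)) (t : Fin n → Fin m) :
    dropCLM m n i η t = η (Fin.cons i t) := rfl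

lemma consCLM_apply (ξ : TP m n) (s : Fin (n + 1) → Fin m) :
    consCLM m n i ξ s = if s 0 = i then ξ (Fin.tail s) else 0 := by
  simp only [consCLM, LinearMap.coe_toContinuousLinearMap', Matrix.toLpLin_apply]
  by_cases h : s 0 = i
  · simp only [Matrix.mulVec, dotProduct, ite_and, Matrix.of_apply, h, ↓reduceIte, ite_mul,
      one_mul, zero_mul, Finset.sum_ite_eq, Finset.mem_univ]
    rfl
  · simp [Matrix.mulVec, dotProduct, h]

lemma consCLM_apply_cons (j : Fin m) (ξ : TP m n) (t : Fin n → Fin m) :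
    consCLM m n i ξ (Fin.cons j t) = if j = i then ξ t else 0 := by
  simp [consCLM_apply]

lemma sum_consCLM_dropCLM (η : TP m (n + 1)) :
    ∑ i : Fin m, consCLM m n i (dropCLM m n i η) = η := by
  ext s
  simp only [WithLp.ofLp_sum, Finset.sum_apply, consCLM_apply, dropCLM_apply,
    Finset.sum_ite_eq, Finset.mem_univ, if_true, Fin.cons_self_tail]

lemma adjoint_consCLM : (consCLM m n i).adjoint = dropCLM m n i := by
  refine ((ContinuousLinearMap.eq_adjoint_iff _ _).2 fun η ξ => ?_).symm
  simp only [PiLp.inner_apply, RCLike.inner_apply, dropCLM_apply]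
  rw [← (Fin.consEquiv fun _ : Fin (n + 1) => Fin m).sum_comp, Fintype.sum_prod_type,
    Finset.sum_comm]
  simp [Fin.consEquiv, consCLM_apply_cons]

lemma consCLM_mem_Jsp {v : TP m n} (hv : v ∈ Jsp m A n) :
    consCLM m n i v ∈ Jsp m A (n + 1) := by
  induction hv using Submodule.span_induction with
  | mem w hw =>
      obtain ⟨k, hk, x, y, rfl⟩ := hw
      apply Submodule.subset_span
      -- `e_i ⊗ (x ⊗ p ⊗ y) = (e_i ⊗ x) ⊗ p ⊗ y`
      refine ⟨k + 1, by omega, consCLM m k i x,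
        WithLp.toLp 2 fun t => y fun j => t ⟨j.1, by omega⟩, ?_⟩
      ext s
      simp only [consCLM_apply, Fin.tail_def, Fin.val_zero, Fin.zero_eta]
      by_cases h : s 0 = i <;> simp [h, Nat.add_right_comm]
  | zero => simp
  | add u w _ _ hu hw => rw [map_add]; exact add_mem hu hw
  | smul c u _ hu => rw [map_smul]; exact Submodule.smul_mem _ c hu

lemma dropCLM_mem_Hsp {ξ : TP m (n + 1)} (hξ : ξ ∈ Hsp m A (n + 1)) :
    dropCLM m n i ξ ∈ Hsp m A n := by
  refine (Submodule.mem_orthogonal _ _).2 fun v hv => ?_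
  rw [← adjoint_consCLM, ContinuousLinearMap.adjoint_inner_right]
  exact (Submodule.mem_orthogonal _ _).1 hξ _ (consCLM_mem_Jsp m A n i hv)

lemma coe_LopHadj_apply (ξ : Hsp m A (n + 1)) :
    (LopHadj m A n i ξ : TP m n) = dropCLM m n i ξ := by
  rw [LopHadj, LopH, ContinuousLinearMap.adjoint_comp, ContinuousLinearMap.adjoint_comp,
    Submodule.adjoint_orthogonalProjectionOnto, Submodule.adjoint_subtypeL, adjoint_consCLM]
  exact congrArg Subtype.val <| Submodule.orthogonalProjectionOnto_mem_subspace_eq_self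
    ⟨_, dropCLM_mem_Hsp m A n i ξ.2⟩

end

/-- Here `L_i : H_n → H_{n+1}`, so `n + 1` ranges over all degrees `≥ 1`. -/
theorem statement5_general (m : ℕ) (A : Matrix (Fin m) (Fin m) ℂ)
    (n : ℕ) :
    ∑ i : Fin m, LopH m A n i ∘L LopHadj m A n i
      = ContinuousLinearMap.id ℂ (Hsp m A (n + 1)) := by
  ext1 ξ
  calc (∑ i : Fin m, LopH m A n i ∘L LopHadj m A n i) ξ
      = Submodule.orthogonalProjectionOnto (Hsp m A (n + 1))
          (∑ i : Fin m, consCLM m n i (dropCLM m n i ξ)) := by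
        simp [LopH, coe_LopHadj_apply]
    _ = ξ := by
        rw [sum_consCLM_dropCLM, Submodule.orthogonalProjectionOnto_mem_subspace_eq_self]

/-- for every `n ≥ 1`, `Σ_{i=1}^m L_i L_i* = id_{H_n}`, where each
`L_i : H_{n-1} → H_n` (written here with `n` replaced by `n+1`, so the index
ranges exactly over all `n ≥ 1`). -/
theorem statement5 (m : ℕ) (hm : 2 ≤ m) (A : Matrix (Fin m) (Fin m) ℂ)
    (hA : IsUnit A)
    (hAA : A * A.map (starRingEnd ℂ) ∈ Matrix.unitaryGroup (Fin m) ℂ)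
    (n : ℕ) :
    ∑ i : Fin m, LopH m A n i ∘L LopHadj m A n i
      = ContinuousLinearMap.id ℂ (Hsp m A (n + 1)) :=
  statement5_general m A n
end
end
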